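/- The sequence λ(f) defined by λ_i := f_{σ(i)} − #{j ∈ Des_G(π(f)) : j ≤ i−1} for 1 ≤ i ≤ n (where π(f) = (c_1,...,c_n;σ)) is a nondecreasing sequence of nonnegative integers, i.e. a partition in P_n, for every f ∈ N_0^{(r,n)}. -/

import Mathlib

open Finset

namespace Paper

/-- An element of `G(r,n) = ℤ_r ≀ S_n`: a pair (underlying permutation, color vector). -/
abbrev CPerm (r n : ℕ) := Equiv.Perm (Fin n) × (Fin n → Fin r)

/-- A colored sequence: values and colors. -/
abbrev CSeq (r n : ℕ) := (Fin n → ℕ) × (Fin n → Fin r)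

variable {r n : ℕ}

/-- The order on colored integers (value, color):
`n^{r-1} < ⋯ < n^1 < ⋯ < 1^{r-1} < ⋯ < 1^1 < 0 < 1 < ⋯ < n`.
`clt a b` means `a < b`. -/
def clt (a b : ℕ × ℕ) : Prop :=
  (0 < a.2 ∧ b.2 = 0) ∨
  (0 < a.2 ∧ 0 < b.2 ∧ (b.1 < a.1 ∨ (a.1 = b.1 ∧ b.2 < a.2))) ∨
  (a.2 = 0 ∧ b.2 = 0 ∧ a.1 < b.1)

instance (a b : ℕ × ℕ) : Decidable (clt a b) := by unfold clt; exact inferInstance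

/-- The colored entry of `γ` at (0-based) position `i`: value `σ(i)` (1-based) with its color. -/
def entry (γ : CPerm r n) (i : Fin n) : ℕ × ℕ := ((γ.1 i : ℕ) + 1, (γ.2 i : ℕ))

/-- Window value `γ(i)` for `i ∈ [0,n]` (1-based positions), with `γ(0) := 0`. -/
def wval (γ : CPerm r n) (i : ℕ) : ℕ × ℕ :=
  if h : 1 ≤ i ∧ i ≤ n then ((γ.1 ⟨i - 1, by omega⟩ : ℕ) + 1, (γ.2 ⟨i - 1, by omega⟩ : ℕ))
  else (0, 0)

/-- Descent set `Des_G(γ) = {i ∈ [0,n-1] : γ(i) > γ(i+1)}`, with `γ(0) := 0`. -/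
def DesG (γ : CPerm r n) : Finset ℕ :=
  (range n).filter fun i => clt (wval γ (i + 1)) (wval γ i)

def desG (γ : CPerm r n) : ℕ := (DesG γ).card

def majG (γ : CPerm r n) : ℕ := ∑ i ∈ DesG γ, i

def colG (γ : CPerm r n) : ℕ := ∑ i, (γ.2 i : ℕ)

/-- Number of inversions: pairs `i < j` with `γ(i) > γ(j)` in the colored order. -/
def invG (γ : CPerm r n) : ℕ :=
  ((univ : Finset (Fin n × Fin n)).filter fun p =>
    p.1 < p.2 ∧ clt (entry γ p.2) (entry γ p.1)).card

/-- Length `ℓ_G(γ) = inv(γ) + Σ_{c_i ≠ 0} (σ(i) + c_i - 1)` (σ(i) 1-based). -/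
def lenG (γ : CPerm r n) : ℕ :=
  invG γ + ∑ i ∈ univ.filter (fun i => (γ.2 i : ℕ) ≠ 0), ((γ.1 i : ℕ) + (γ.2 i : ℕ))

/-- Membership in `N_0^{(r,n)}`: a zero value has color 0. -/
def ValidSeq (f : CSeq r n) : Prop := ∀ i, f.1 i = 0 → (f.2 i : ℕ) = 0

/-- The defining property of `π(f) = γ = (c;σ)`:
`f_{σ(1)} ≤ … ≤ f_{σ(n)}`, `c_i(γ) = c_{σ(i)}(f)`, and `γ(i) < γ(i+1)` whenever
`f_{σ(i)} = f_{σ(i+1)}`. -/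
def isPi (f : CSeq r n) (γ : CPerm r n) : Prop :=
  (∀ i j : Fin n, i ≤ j → f.1 (γ.1 i) ≤ f.1 (γ.1 j)) ∧
  (∀ i, γ.2 i = f.2 (γ.1 i)) ∧
  (∀ i j : Fin n, (i : ℕ) + 1 = (j : ℕ) → f.1 (γ.1 i) = f.1 (γ.1 j) →
    clt (entry γ i) (entry γ j))

def maxf (f : CSeq r n) : ℕ := univ.sup f.1

def sumf (f : CSeq r n) : ℕ := ∑ i, f.1 i

/-- The partition `λ(f)` (relative to `γ = π(f)`), with values in `ℤ`:
`λ_i = f_{σ(i)} - #{j ∈ Des_G(γ) : j ≤ i-1}` (1-based `i`). -/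
def lamZ (f : CSeq r n) (γ : CPerm r n) (i : Fin n) : ℤ :=
  (f.1 (γ.1 i) : ℤ) - ((DesG γ).filter (· ≤ (i : ℕ))).card

/-- 1-based reading of an `n`-tuple, with value `0` at index `0` (and outside `[1,n]`). -/
def mval (μ : Fin n → ℕ) (i : ℕ) : ℕ :=
  if h : 1 ≤ i ∧ i ≤ n then μ ⟨i - 1, by omega⟩ else 0

/-- `μ` is `γ`-compatible: `μ_i < μ_{i+1}` for all `i ∈ Des_G(γ)` (with `μ_0 := 0`). -/
def compat (μ : Fin n → ℕ) (γ : CPerm r n) : Prop :=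
  ∀ i ∈ DesG γ, mval μ i < mval μ (i + 1)

/-- The skew inverse `γ̃⁻¹ = (c_{σ⁻¹(1)},…,c_{σ⁻¹(n)}; σ⁻¹)`. -/
def skewInv (γ : CPerm r n) : CPerm r n := (γ.1⁻¹, fun i => γ.2 (γ.1⁻¹ i))

/-- The group inverse: `γ⁻¹ = (c'; σ⁻¹)` with `c'_i = (r - c_{σ⁻¹(i)}) mod r`. -/
def cinv (γ : CPerm r n) : CPerm r n :=
  (γ.1⁻¹, fun i =>
    ⟨(r - (γ.2 (γ.1⁻¹ i) : ℕ)) % r,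
      Nat.mod_lt _ (Nat.lt_of_le_of_lt (Nat.zero_le _) (γ.2 (γ.1⁻¹ i)).isLt)⟩)

/-- The group law of `G(r,n)`: `(c;σ)·(d;τ) = ((d_i + c_{τ(i)}) mod r; στ)`. -/
def cmul (x y : CPerm r n) : CPerm r n :=
  (x.1 * y.1, fun i =>
    ⟨((y.2 i : ℕ) + (x.2 (y.1 i) : ℕ)) % r,
      Nat.mod_lt _ (Nat.lt_of_le_of_lt (Nat.zero_le _) (y.2 i).isLt)⟩)

/-- The color-forgetting projection `φ : G(r,n) → B_n = G(2,n)`. -/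
def phi (γ : CPerm r n) : CPerm 2 n := (γ.1, fun i => ⟨min (γ.2 i : ℕ) 1, by omega⟩)

/-- `[m]_p = 1 + p + ⋯ + p^{m-1}`. -/
def qint {R : Type*} [CommRing R] (p : R) (m : ℕ) : R := ∑ j ∈ range m, p ^ j

/-- `[m]_p! = [1]_p [2]_p ⋯ [m]_p`. -/
def qfact {R : Type*} [CommRing R] (p : R) (m : ℕ) : R := ∏ j ∈ range m, qint p (j + 1)

/-- `[m̂]_{b,p}! = (1+bp)(1+bp²)⋯(1+bp^m)·[m]_p!`. -/
def hqfact {R : Type*} [CommRing R] (b p : R) (m : ℕ) : R :=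
  (∏ i ∈ range m, (1 + b * p ^ (i + 1))) * qfact p m

/-- A formal power series in two variables `X 0, X 1` from its coefficients. -/
def seriesOf2 (F : ℕ → ℕ → ℚ) : MvPowerSeries (Fin 2) ℚ := fun d => F (d 0) (d 1)

/-- A formal power series in three variables from its coefficients. -/
def seriesOf3 (F : ℕ → ℕ → ℕ → ℚ) : MvPowerSeries (Fin 3) ℚ := fun d => F (d 0) (d 1) (d 2)

/-
Along the window of `γ = π(f)`, the count of descents at positions `≤ i` grows by at most one per
step, and only at a descent `j`; but `π(f)` lists equal values of `f` in increasing colored order, so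
at a descent the value of `f` strictly increases and pays for it. At position `0` a descent means
`γ(1)` carries a nonzero color, which for `f ∈ N_0^{(r,n)}` forces `f_{σ(1)} ≥ 1`.
-/

theorem card_filter_le_le_card_filter_lt_add_one {α : Type*} [LinearOrder α] (s : Finset α)
    (k : α) :
    #(s.filter (· ≤ k)) ≤ #(s.filter (· < k)) + 1 := by
  have hsub : s.filter (· ≤ k) ⊆ insert k (s.filter (· < k)) := by
    intro x hx
    rw [mem_filter] at hx
    rcases hx.2.eq_or_lt with h | h
    · exact mem_insert.2 (Or.inl h)
    · exact mem_insert_of_mem (mem_filter.2 ⟨hx.1, h⟩)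
  exact (card_le_card hsub).trans (card_insert_le _ _)

theorem filter_le_eq_filter_lt_of_notMem {α : Type*} [LinearOrder α] {s : Finset α} {k : α}
    (hk : k ∉ s) : s.filter (· ≤ k) = s.filter (· < k) :=
  filter_congr fun _ hx => (ne_of_mem_of_not_mem hx hk).le_iff_lt

theorem clt_asymm {a b : ℕ × ℕ} (h : clt a b) : ¬ clt b a := by
  unfold clt at *
  omega

theorem wval_succ (γ : CPerm r n) (i : Fin n) : wval γ (i + 1) = entry γ i := by
  simp [wval, entry]

theorem succ_mem_DesG_iff {γ : CPerm r n} {i j : Fin n} (hij : (i : ℕ) + 1 = j) :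
    (j : ℕ) ∈ DesG γ ↔ clt (entry γ j) (entry γ i) := by
  rw [DesG, mem_filter, wval_succ, ← hij, wval_succ]
  simp only [mem_range, and_iff_right_iff_imp]
  omega

theorem color_pos_of_zero_mem_DesG {γ : CPerm r n} (hn : 0 < n) (h : 0 ∈ DesG γ) :
    0 < (γ.2 ⟨0, hn⟩ : ℕ) := by
  have h0 : wval γ 0 = (0, 0) := by simp [wval]
  have h1 : wval γ 1 = entry γ ⟨0, hn⟩ := wval_succ γ ⟨0, hn⟩
  rw [DesG, mem_filter, zero_add, h0, h1] at h
  unfold clt entry at h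
  omega

theorem isPi.lamZ_le_of_succ {f : CSeq r n} {γ : CPerm r n} (hγ : isPi f γ) {i j : Fin n}
    (hij : (i : ℕ) + 1 = j) : lamZ f γ i ≤ lamZ f γ j := by
  have hlt : (DesG γ).filter (· < (j : ℕ)) = (DesG γ).filter (· ≤ (i : ℕ)) :=
    filter_congr fun x _ => by omega
  have hle : f.1 (γ.1 i) ≤ f.1 (γ.1 j) := hγ.1 i j (Fin.le_def.2 (by omega))
  unfold lamZ
  by_cases hd : (j : ℕ) ∈ DesG γ
  · have hstrict : f.1 (γ.1 i) < f.1 (γ.1 j) := hle.lt_of_ne fun he =>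
      clt_asymm (hγ.2.2 i j hij he) ((succ_mem_DesG_iff hij).1 hd)
    have hcard := card_filter_le_le_card_filter_lt_add_one (DesG γ) j
    rw [hlt] at hcard
    omega
  · rw [filter_le_eq_filter_lt_of_notMem hd, hlt]
    omega

theorem isPi.monotone_lamZ {f : CSeq r n} {γ : CPerm r n} (hγ : isPi f γ) :
    Monotone (lamZ f γ) := by
  cases n with
  | zero => exact fun i => i.elim0
  | succ m => exact Fin.monotone_iff_le_succ.2 fun i => hγ.lamZ_le_of_succ (by simp)

theorem isPi.lamZ_zero_nonneg {f : CSeq r n} {γ : CPerm r n} (hf : ValidSeq f) (hγ : isPi f γ)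
    (hn : 0 < n) : 0 ≤ lamZ f γ ⟨0, hn⟩ := by
  unfold lamZ
  by_cases hd : 0 ∈ DesG γ
  · have hcolor : (f.2 (γ.1 ⟨0, hn⟩) : ℕ) ≠ 0 := by
      rw [← hγ.2.1]
      exact (color_pos_of_zero_mem_DesG hn hd).ne'
    have hval : f.1 (γ.1 ⟨0, hn⟩) ≠ 0 := fun h => hcolor (hf _ h)
    have hcard : #((DesG γ).filter (· ≤ ((⟨0, hn⟩ : Fin n) : ℕ))) ≤ 1 :=
      (card_filter_le_le_card_filter_lt_add_one _ _).trans (by simp)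
    omega
  · rw [filter_le_eq_filter_lt_of_notMem hd]
    simp

theorem stmt2_general (r n : ℕ)
    (π : CSeq r n → CPerm r n)
    (hπ : ∀ f, ValidSeq f → isPi f (π f) ∧ ∀ γ, isPi f γ → γ = π f)
    (f : CSeq r n) (hf : ValidSeq f) :
    Monotone (lamZ f (π f)) ∧ ∀ i, 0 ≤ lamZ f (π f) i := by
  have hγ := (hπ f hf).1
  refine ⟨hγ.monotone_lamZ, fun i => ?_⟩
  exact (hγ.lamZ_zero_nonneg hf i.pos).trans (hγ.monotone_lamZ (Fin.le_def.2 i.val.zero_le))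

/-- Lemma 3.4: the sequence `λ(f)` is a nondecreasing sequence of
nonnegative integers, i.e. a partition in `P_n`, for every `f ∈ N_0^{(r,n)}`. -/
theorem stmt2 (r n : ℕ) (hr : 0 < r)
    (π : CSeq r n → CPerm r n)
    (hπ : ∀ f, ValidSeq f → isPi f (π f) ∧ ∀ γ, isPi f γ → γ = π f)
    (f : CSeq r n) (hf : ValidSeq f) :
    Monotone (lamZ f (π f)) ∧ ∀ i, 0 ≤ lamZ f (π f) i :=
  stmt2_general r n π hπ f hf

end Paper
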